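/- arXiv:2308.12484 — 3 statements merged into one kernel-verified Lean document; each statement's English description precedes it below -/
import Mathlib

section
/- The trigonometric R-matrix R(u,v) and its partially transposed version R^{t}(u^{-1},v) commute: R(u,v)\,R^{t}(u^{-1},v) = R^{t}(u^{-1},v)\,R(u,v), where R^{t}(u,v) is obtained from R(u,v) by transposing the first tensor factor. -/
open Matrix Kronecker
set_option synthInstance.maxHeartbeats 1000000
set_option maxHeartbeats 1000000
set_option maxSynthPendingDepth 5

/-- The field ℂ(q,u,v) of rational functions in three variables. -/
noncomputable abbrev Kquv := RatFunc (RatFunc (RatFunc ℂ))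

noncomputable def qv : Kquv := RatFunc.C (RatFunc.C RatFunc.X)
noncomputable def uv : Kquv := RatFunc.C RatFunc.X
noncomputable def vv : Kquv := RatFunc.X

/-- The trigonometric R-matrix `R(u,v)`. -/
noncomputable def Rm (n : ℕ) (q u v : Kquv) :
    Matrix (Fin n × Fin n) (Fin n × Fin n) Kquv :=
  (u - v) • (∑ i : Fin n, ∑ j : Fin n, if i ≠ j then
      (Matrix.single i i (1 : Kquv)) ⊗ₖ (Matrix.single j j 1) else 0)
  + (q⁻¹ * u - q * v) • (∑ i : Fin n,
      (Matrix.single i i (1 : Kquv)) ⊗ₖ (Matrix.single i i 1))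
  + ((q⁻¹ - q) * u) • (∑ i : Fin n, ∑ j : Fin n, if j < i then
      (Matrix.single i j (1 : Kquv)) ⊗ₖ (Matrix.single j i 1) else 0)
  + ((q⁻¹ - q) * v) • (∑ i : Fin n, ∑ j : Fin n, if i < j then
      (Matrix.single i j (1 : Kquv)) ⊗ₖ (Matrix.single j i 1) else 0)

/-- `Rᵗ(u,v)`: the R-matrix with the first tensor factor transposed. -/
noncomputable def Rmt (n : ℕ) (q u v : Kquv) :
    Matrix (Fin n × Fin n) (Fin n × Fin n) Kquv :=
  (u - v) • (∑ i : Fin n, ∑ j : Fin n, if i ≠ j then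
      (Matrix.single i i (1 : Kquv)) ⊗ₖ (Matrix.single j j 1) else 0)
  + (q⁻¹ * u - q * v) • (∑ i : Fin n,
      (Matrix.single i i (1 : Kquv)) ⊗ₖ (Matrix.single i i 1))
  + ((q⁻¹ - q) * u) • (∑ i : Fin n, ∑ j : Fin n, if j < i then
      (Matrix.single j i (1 : Kquv)) ⊗ₖ (Matrix.single j i 1) else 0)
  + ((q⁻¹ - q) * v) • (∑ i : Fin n, ∑ j : Fin n, if i < j then
      (Matrix.single j i (1 : Kquv)) ⊗ₖ (Matrix.single j i 1) else 0)

/-! Let `D` be the span of the vectors `eᵢ ⊗ eᵢ` and `D'` the span of the `eᵢ ⊗ eⱼ`, `i ≠ j`.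
Every term of `R(u,v)` and of `Rᵗ(w,v')` maps each of `D`, `D'` into itself, so both matrices
commute with the projection `P` onto `D`. Moreover `R(u,v)` acts on `D` as the scalar
`q⁻¹u - qv`, and `Rᵗ(w,v')` acts on `D'` as the scalar `w - v'`. Comparing `R Rᵗ` and `Rᵗ R`
on `D` and on `D'` separately shows that they agree for all values of the parameters; the
theorem is the case `w = u⁻¹`. -/

theorem Commute.of_mul_eq_smul_of_mul_one_sub_eq_smul {K A : Type*} [CommSemiring K] [Ring A]
    [Algebra K A] {a b p : A} {α β : K} (hap : Commute a p) (hbp : Commute b p)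
    (ha : a * p = α • p) (hb : b * (1 - p) = β • (1 - p)) : Commute a b := by
  have on_p : a * b * p = b * a * p :=
    calc a * b * p = a * p * b := by rw [mul_assoc, hbp.eq, ← mul_assoc]
      _ = b * (α • p) := by rw [ha, smul_mul_assoc, ← hbp.eq, mul_smul_comm]
      _ = b * a * p := by rw [← ha, mul_assoc]
  have hap' : Commute a (1 - p) := (Commute.one_right a).sub_right hap
  have on_one_sub_p : a * b * (1 - p) = b * a * (1 - p) :=
    calc a * b * (1 - p) = β • (a * (1 - p)) := by rw [mul_assoc, hb, mul_smul_comm]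
      _ = b * (1 - p) * a := by rw [hap'.eq, ← smul_mul_assoc, ← hb]
      _ = b * a * (1 - p) := by rw [mul_assoc, ← hap'.eq, mul_assoc]
  calc a * b = a * b * p + a * b * (1 - p) := by noncomm_ring
    _ = b * a * p + b * a * (1 - p) := by rw [on_p, on_one_sub_p]
    _ = b * a := by noncomm_ring

theorem Matrix.commute_diagonal_ite {ι R : Type*} [Fintype ι] [DecidableEq ι] [Semiring R]
    (s : ι → Prop) [DecidablePred s] {M : Matrix ι ι R}
    (hM : ∀ x y, (s x ↔ ¬ s y) → M x y = 0) :
    Commute M (diagonal fun x => if s x then 1 else 0) := by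
  ext x y
  by_cases hx : s x <;> by_cases hy : s y <;> simp [mul_diagonal, diagonal_mul, hx, hy, hM x y]

theorem Fintype.sum_sum_eq_single {ι κ M : Type*} [Fintype ι] [Fintype κ] [AddCommMonoid M]
    {f : ι → κ → M} (a : ι) (b : κ) (h : ∀ x y, (x, y) ≠ (a, b) → f x y = 0) :
    ∑ x, ∑ y, f x y = f a b := by
  rw [← Fintype.sum_prod_type']
  exact Fintype.sum_eq_single (a, b) fun p hp => h p.1 p.2 hp

section

variable (n : ℕ) (q u v : Kquv)

theorem Rm_apply (a b c d : Fin n) :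
    Rm n q u v (a, b) (c, d) =
      (if a ≠ b ∧ a = c ∧ b = d then u - v else 0)
    + (if a = b ∧ a = c ∧ a = d then q⁻¹ * u - q * v else 0)
    + (if b < a ∧ b = c ∧ a = d then (q⁻¹ - q) * u else 0)
    + (if a < b ∧ b = c ∧ a = d then (q⁻¹ - q) * v else 0) := by
  simp only [Rm, Matrix.add_apply, Matrix.smul_apply, Matrix.sum_apply, single_kronecker_single,
    apply_ite (fun M : Matrix (Fin n × Fin n) (Fin n × Fin n) Kquv => M (a, b) (c, d)),
    Matrix.zero_apply, single_apply, Prod.mk.injEq, smul_eq_mul]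
  rw [Fintype.sum_sum_eq_single a b (by grind), Fintype.sum_eq_single a (by grind),
    Fintype.sum_sum_eq_single a b (by grind), Fintype.sum_sum_eq_single a b (by grind)]
  simp only [true_and, mul_ite, mul_one, mul_zero, ← ite_and]

theorem Rmt_apply (a b c d : Fin n) :
    Rmt n q u v (a, b) (c, d) =
      (if a ≠ b ∧ a = c ∧ b = d then u - v else 0)
    + (if a = b ∧ a = c ∧ a = d then q⁻¹ * u - q * v else 0)
    + (if a < c ∧ a = b ∧ c = d then (q⁻¹ - q) * u else 0)
    + (if c < a ∧ a = b ∧ c = d then (q⁻¹ - q) * v else 0) := by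
  simp only [Rmt, Matrix.add_apply, Matrix.smul_apply, Matrix.sum_apply, single_kronecker_single,
    apply_ite (fun M : Matrix (Fin n × Fin n) (Fin n × Fin n) Kquv => M (a, b) (c, d)),
    Matrix.zero_apply, single_apply, Prod.mk.injEq, smul_eq_mul]
  rw [Fintype.sum_sum_eq_single a b (by grind), Fintype.sum_eq_single a (by grind),
    Fintype.sum_sum_eq_single c a (by grind), Fintype.sum_sum_eq_single c a (by grind)]
  simp only [true_and, mul_ite, mul_one, mul_zero, ← ite_and]

noncomputable def tensorDiagProj : Matrix (Fin n × Fin n) (Fin n × Fin n) Kquv :=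
  diagonal fun x => if x.1 = x.2 then 1 else 0

theorem Rm_commute_tensorDiagProj : Commute (Rm n q u v) (tensorDiagProj n) :=
  commute_diagonal_ite _ fun ⟨a, b⟩ ⟨c, d⟩ h => by rw [Rm_apply]; grind

theorem Rmt_commute_tensorDiagProj : Commute (Rmt n q u v) (tensorDiagProj n) :=
  commute_diagonal_ite _ fun ⟨a, b⟩ ⟨c, d⟩ h => by rw [Rmt_apply]; grind

theorem Rm_mul_tensorDiagProj :
    Rm n q u v * tensorDiagProj n = (q⁻¹ * u - q * v) • tensorDiagProj n := by
  ext ⟨a, b⟩ ⟨c, d⟩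
  simp only [tensorDiagProj, mul_diagonal, Rm_apply, Matrix.smul_apply, diagonal_apply,
    Prod.mk.injEq, smul_eq_mul]
  grind

theorem Rmt_mul_one_sub_tensorDiagProj :
    Rmt n q u v * (1 - tensorDiagProj n) = (u - v) • (1 - tensorDiagProj n) := by
  ext ⟨a, b⟩ ⟨c, d⟩
  simp only [tensorDiagProj, Matrix.mul_sub, mul_one, mul_diagonal, Rmt_apply, Matrix.smul_apply,
    Matrix.sub_apply, one_apply, diagonal_apply, Prod.mk.injEq, smul_eq_mul]
  grind

end

theorem Rm_commute_Rmt (n : ℕ) (q u v q' u' v' : Kquv) : Commute (Rm n q u v) (Rmt n q' u' v') :=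
  .of_mul_eq_smul_of_mul_one_sub_eq_smul (Rm_commute_tensorDiagProj n q u v)
    (Rmt_commute_tensorDiagProj n q' u' v') (Rm_mul_tensorDiagProj n q u v)
    (Rmt_mul_one_sub_tensorDiagProj n q' u' v')

theorem R_Rt_commute_general (n : ℕ) :
    Rm n qv uv vv * Rmt n qv uv⁻¹ vv = Rmt n qv uv⁻¹ vv * Rm n qv uv vv :=
  (Rm_commute_Rmt n qv uv vv qv uv⁻¹ vv).eq

/-- `R(u,v)` and `Rᵗ(u⁻¹,v)` commute. -/
theorem R_Rt_commute (n : ℕ) (hn : 1 ≤ n) :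
    Rm n qv uv vv * Rmt n qv uv⁻¹ vv = Rmt n qv uv⁻¹ vv * Rm n qv uv vv :=
  R_Rt_commute_general n
end

section
/- Suppose, in an associative algebra of formal series, the generating series d_1(u), e(v), f(v) satisfy relations (5.4) and (5.5) of the paper: (1-q^2)(1-q^2uv)u\,d_1(u)e(u) - (1-q^2uv)(u-q^2v)\,d_1(u)e(v) = -q^2(u-v)(1-uv)\,e(v)d_1(u) - q(1-q^2)(u-v)\,f(u)d_1(u), and quv(1-q^2)(u-v)\,d_1(u)e(u) + q^2(u-v)(1-uv)\,d_1(u)f(v) = (u-q^2v)(1-q^2uv)\,f(v)d_1(u) - v(1-q^2)(1-q^2uv)\,f(u)d_1(u). Define \mathcal{E}(v) = e(vq^{-1}) and \mathcal{F}(v) = q f(v^{-1}q^{-1}). Then d_1(u)\big(\mathcal{E}(v) - \mathcal{F}(v)\big) = \frac{(1-q^{-1}uv)(1-quv^{-1})}{(1-quv)(1-q^{-1}uv^{-1})}\big(\mathcal{E}(v) - \mathcal{F}(v)\big) d_1(u). -/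
/-!
Specialise (5.4) at `(u, v q⁻¹)` and (5.5) at `(u, v⁻¹ q⁻¹)`. In the combination of the two with
coefficients `1 - q u v` and `q v² (1 - q u v)` the terms in `d₁(u) e(u)` and `f(u) d₁(u)` cancel,
so `d₁(u)(𝓔(v) - 𝓕(v))` and `(𝓔(v) - 𝓕(v)) d₁(u)` are proportional; the ratio of the two
coefficients is the rational prefactor.
-/

theorem smul_d1_mul_sub_eq_smul_sub_mul_d1 {F A : Type*} [Field F] [Ring A] [Algebra F A]
    {q : F} (hq : q ≠ 0) {d1' e' f' : F → A}
    (h54 : ∀ u v : F,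
      ((1 - q ^ 2) * (1 - q ^ 2 * u * v) * u) • (d1' u * e' u)
        - ((1 - q ^ 2 * u * v) * (u - q ^ 2 * v)) • (d1' u * e' v)
      = (-(q ^ 2 * (u - v) * (1 - u * v))) • (e' v * d1' u)
        - (q * (1 - q ^ 2) * (u - v)) • (f' u * d1' u))
    (h55 : ∀ u v : F,
      (q * u * v * (1 - q ^ 2) * (u - v)) • (d1' u * e' u)
        + (q ^ 2 * (u - v) * (1 - u * v)) • (d1' u * f' v)
      = ((u - q ^ 2 * v) * (1 - q ^ 2 * u * v)) • (f' v * d1' u)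
        - (v * (1 - q ^ 2) * (1 - q ^ 2 * u * v)) • (f' u * d1' u))
    (u : F) {v : F} (hv : v ≠ 0) :
    ((1 - q * u * v) ^ 2 * (q * v - u)) • (d1' u * (e' (v * q⁻¹) - q • f' (v⁻¹ * q⁻¹)))
      = (-((1 - q * u * v) * (q * u - v) * (q - u * v))) •
          ((e' (v * q⁻¹) - q • f' (v⁻¹ * q⁻¹)) * d1' u) := by
  rw [mul_sub (d1' u), sub_mul _ _ (d1' u), mul_smul_comm, smul_mul_assoc]
  linear_combination (norm := skip)
    (1 - q * u * v) • h54 u (v * q⁻¹) + (q * v ^ 2 * (1 - q * u * v)) • h55 u (v⁻¹ * q⁻¹)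
  match_scalars <;> field_simp <;> ring

theorem d1_commutation_general {F : Type*} [Field F] {A : Type*} [Ring A] [Algebra F A]
    (q : F) (hq : q ≠ 0) (d1' e' f' : F → A)
    (h54 : ∀ u v : F,
      ((1 - q ^ 2) * (1 - q ^ 2 * u * v) * u) • (d1' u * e' u)
        - ((1 - q ^ 2 * u * v) * (u - q ^ 2 * v)) • (d1' u * e' v)
      = (-(q ^ 2 * (u - v) * (1 - u * v))) • (e' v * d1' u)
        - (q * (1 - q ^ 2) * (u - v)) • (f' u * d1' u))
    (h55 : ∀ u v : F,
      (q * u * v * (1 - q ^ 2) * (u - v)) • (d1' u * e' u)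
        + (q ^ 2 * (u - v) * (1 - u * v)) • (d1' u * f' v)
      = ((u - q ^ 2 * v) * (1 - q ^ 2 * u * v)) • (f' v * d1' u)
        - (v * (1 - q ^ 2) * (1 - q ^ 2 * u * v)) • (f' u * d1' u))
    (u v : F) (hv : v ≠ 0)
    (hden : (1 - q * u * v) * (1 - q⁻¹ * u * v⁻¹) ≠ 0) :
    d1' u * (e' (v * q⁻¹) - q • f' (v⁻¹ * q⁻¹))
      = (((1 - q⁻¹ * u * v) * (1 - q * u * v⁻¹)) /
          ((1 - q * u * v) * (1 - q⁻¹ * u * v⁻¹))) •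
        ((e' (v * q⁻¹) - q • f' (v⁻¹ * q⁻¹)) * d1' u) := by
  obtain ⟨hquv, hqvu⟩ := mul_ne_zero_iff.mp hden
  replace hqvu : q * v - u ≠ 0 := by
    rwa [show 1 - q⁻¹ * u * v⁻¹ = (q * v - u) / (q * v) by field_simp, div_ne_zero_iff,
      and_iff_left (mul_ne_zero hq hv)] at hqvu
  refine smul_right_injective A (mul_ne_zero (pow_ne_zero 2 hquv) hqvu) ?_
  dsimp only
  rw [smul_d1_mul_sub_eq_smul_sub_mul_d1 hq h54 h55 u hv, smul_smul]
  congr 1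
  field_simp
  ring

/-- Lemma 5.4 (first identity) of the paper: given the generating-series
relations (5.4) and (5.5) of the rank-1 twisted q-Yangian (read off pointwise
at all values of the formal parameters), with `𝓔(v) = e(vq⁻¹)` and
`𝓕(v) = q·f(v⁻¹q⁻¹)`, one has
`d₁(u)(𝓔(v) - 𝓕(v)) = ((1-q⁻¹uv)(1-quv⁻¹))/((1-quv)(1-q⁻¹uv⁻¹)) · (𝓔(v)-𝓕(v)) d₁(u)`. -/
theorem d1_commutation {F : Type*} [Field F] {A : Type*} [Ring A] [Algebra F A]
    (q : F) (hq : q ≠ 0) (d1' e' f' : F → A)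
    (h54 : ∀ u v : F,
      ((1 - q ^ 2) * (1 - q ^ 2 * u * v) * u) • (d1' u * e' u)
        - ((1 - q ^ 2 * u * v) * (u - q ^ 2 * v)) • (d1' u * e' v)
      = (-(q ^ 2 * (u - v) * (1 - u * v))) • (e' v * d1' u)
        - (q * (1 - q ^ 2) * (u - v)) • (f' u * d1' u))
    (h55 : ∀ u v : F,
      (q * u * v * (1 - q ^ 2) * (u - v)) • (d1' u * e' u)
        + (q ^ 2 * (u - v) * (1 - u * v)) • (d1' u * f' v)
      = ((u - q ^ 2 * v) * (1 - q ^ 2 * u * v)) • (f' v * d1' u)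
        - (v * (1 - q ^ 2) * (1 - q ^ 2 * u * v)) • (f' u * d1' u))
    (u v : F) (hu : u ≠ 0) (hv : v ≠ 0)
    (hden : (1 - q * u * v) * (1 - q⁻¹ * u * v⁻¹) ≠ 0) :
    d1' u * (e' (v * q⁻¹) - q • f' (v⁻¹ * q⁻¹))
      = (((1 - q⁻¹ * u * v) * (1 - q * u * v⁻¹)) /
          ((1 - q * u * v) * (1 - q⁻¹ * u * v⁻¹))) •
        ((e' (v * q⁻¹) - q • f' (v⁻¹ * q⁻¹)) * d1' u) :=
  d1_commutation_general q hq d1' e' f' h54 h55 u v hv hden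
end

section
/- In the 2\times 2 twisted q-Yangian setting, suppose an associative algebra contains invertible commuting series d_1(u), d_2(u) and series e(u), f(u) such that relations (5.7) and (5.8) of the paper hold: (u-v)(1-q^4 uv)\,\tilde{d}_2(v) e(u) - q(1-q^2)(u-v)\,\tilde{d}_2(v) f(v) = (u-q^2 v)(1-q^2 uv)\, e(u)\tilde{d}_2(v) - (1-q^2)(1-q^2 uv) v\, e(v)\tilde{d}_2(v), and u(1-q^2)(1-q^2 uv)\,\tilde{d}_2(v) f(v) - (u-q^2 v)(1-q^2 uv)\,\tilde{d}_2(v) f(u) = quv(1-q^2)(u-v)\, e(v)\tilde{d}_2(v) - (u-v)(1-q^4 uv)\, f(u)\tilde{d}_2(v). With \mathcal{E}(v) = e(vq^{-1}), \mathcal{F}(v) = q f(v^{-1}q^{-1}), conclude \tilde{d}_2(u)\big(\mathcal{E}(v) - \mathcal{F}(v)\big) = \frac{(1-quv)(1-q^3 uv^{-1})}{(1-q^3 uv)(1-quv^{-1})}\big(\mathcal{E}(v) - \mathcal{F}(v)\big)\tilde{d}_2(u). -/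
/-!
Specialise (5.7) at `(v q⁻¹, u)` and (5.8) at `(v⁻¹ q⁻¹, u)`. In the combination
`q v⁻¹ · (5.7) + q² v · (5.8)` the terms `d̃₂(u) f(u)` and `e(u) d̃₂(u)` cancel, leaving
`(1 - q³uv)(1 - quv⁻¹) · d̃₂(u)(𝓔(v) - 𝓕(v)) = (1 - quv)(1 - q³uv⁻¹) · (𝓔(v) - 𝓕(v)) d̃₂(u)`;
dividing by the scalar on the left gives the claim.
-/

theorem eq_div_smul_of_smul_eq {F M : Type*} [Field F] [AddCommGroup M] [Module F M]
    {P Q : F} {x y : M} (hP : P ≠ 0) (h : P • x = Q • y) : x = (Q / P) • y := by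
  rw [div_eq_inv_mul, mul_smul, ← h, inv_smul_smul₀ hP]

theorem smul_td2_mul_sub_eq_smul_sub_mul_td2 {F A : Type*} [Field F] [Ring A] [Algebra F A]
    {q : F} (hq : q ≠ 0) {td2 e f : F → A} {u v : F} (hv : v ≠ 0)
    (h57 : ((v * q⁻¹ - u) * (1 - q ^ 4 * (v * q⁻¹) * u)) • (td2 u * e (v * q⁻¹))
        - (q * (1 - q ^ 2) * (v * q⁻¹ - u)) • (td2 u * f u)
      = ((v * q⁻¹ - q ^ 2 * u) * (1 - q ^ 2 * (v * q⁻¹) * u)) • (e (v * q⁻¹) * td2 u)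
        - ((1 - q ^ 2) * (1 - q ^ 2 * (v * q⁻¹) * u) * u) • (e u * td2 u))
    (h58 : (v⁻¹ * q⁻¹ * (1 - q ^ 2) * (1 - q ^ 2 * (v⁻¹ * q⁻¹) * u)) • (td2 u * f u)
        - ((v⁻¹ * q⁻¹ - q ^ 2 * u) * (1 - q ^ 2 * (v⁻¹ * q⁻¹) * u)) • (td2 u * f (v⁻¹ * q⁻¹))
      = (q * (v⁻¹ * q⁻¹) * u * (1 - q ^ 2) * (v⁻¹ * q⁻¹ - u)) • (e u * td2 u)
        - ((v⁻¹ * q⁻¹ - u) * (1 - q ^ 4 * (v⁻¹ * q⁻¹) * u)) • (f (v⁻¹ * q⁻¹) * td2 u)) :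
    ((1 - q ^ 3 * u * v) * (1 - q * u * v⁻¹)) • (td2 u * (e (v * q⁻¹) - q • f (v⁻¹ * q⁻¹)))
      = ((1 - q * u * v) * (1 - q ^ 3 * u * v⁻¹)) •
        ((e (v * q⁻¹) - q • f (v⁻¹ * q⁻¹)) * td2 u) := by
  simp only [mul_sub, sub_mul, smul_mul_assoc, mul_smul_comm, smul_sub, smul_smul]
  linear_combination (norm := match_scalars <;> field_simp <;> ring)
    (q * v⁻¹) • h57 + (q ^ 2 * v) • h58

theorem d2_commutation_general {F : Type*} [Field F] {A : Type*} [Ring A] [Algebra F A]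
    (q : F) (hq : q ≠ 0) (td2' e' f' : F → A)
    (h57 : ∀ u v : F,
      ((u - v) * (1 - q ^ 4 * u * v)) • (td2' v * e' u)
        - (q * (1 - q ^ 2) * (u - v)) • (td2' v * f' v)
      = ((u - q ^ 2 * v) * (1 - q ^ 2 * u * v)) • (e' u * td2' v)
        - ((1 - q ^ 2) * (1 - q ^ 2 * u * v) * v) • (e' v * td2' v))
    (h58 : ∀ u v : F,
      (u * (1 - q ^ 2) * (1 - q ^ 2 * u * v)) • (td2' v * f' v)
        - ((u - q ^ 2 * v) * (1 - q ^ 2 * u * v)) • (td2' v * f' u)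
      = (q * u * v * (1 - q ^ 2) * (u - v)) • (e' v * td2' v)
        - ((u - v) * (1 - q ^ 4 * u * v)) • (f' u * td2' v))
    (u v : F) (hv : v ≠ 0)
    (hden : (1 - q ^ 3 * u * v) * (1 - q * u * v⁻¹) ≠ 0) :
    td2' u * (e' (v * q⁻¹) - q • f' (v⁻¹ * q⁻¹))
      = (((1 - q * u * v) * (1 - q ^ 3 * u * v⁻¹)) /
          ((1 - q ^ 3 * u * v) * (1 - q * u * v⁻¹))) •
        ((e' (v * q⁻¹) - q • f' (v⁻¹ * q⁻¹)) * td2' u) :=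
  eq_div_smul_of_smul_eq hden <|
    smul_td2_mul_sub_eq_smul_sub_mul_td2 hq hv (h57 (v * q⁻¹) u) (h58 (v⁻¹ * q⁻¹) u)

/-- Lemma 5.4 (second identity) of the paper: in the rank-1 twisted q-Yangian,
with invertible commuting series `d₁(u), d₂(u)` (`d̃₂ = d₂⁻¹`) and series
`e(u), f(u)` satisfying relations (5.7) and (5.8) (read pointwise in the formal
parameters), and with `𝓔(v) = e(vq⁻¹)`, `𝓕(v) = q·f(v⁻¹q⁻¹)`, one has
`d̃₂(u)(𝓔(v)-𝓕(v)) = ((1-quv)(1-q³uv⁻¹))/((1-q³uv)(1-quv⁻¹)) · (𝓔(v)-𝓕(v)) d̃₂(u)`. -/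
theorem d2_commutation {F : Type*} [Field F] {A : Type*} [Ring A] [Algebra F A]
    (q : F) (hq : q ≠ 0) (d1' d2' td2' e' f' : F → A)
    (hinv : ∀ u : F, d2' u * td2' u = 1 ∧ td2' u * d2' u = 1)
    (hcomm : ∀ u v : F, d1' u * d2' v = d2' v * d1' u)
    (h57 : ∀ u v : F,
      ((u - v) * (1 - q ^ 4 * u * v)) • (td2' v * e' u)
        - (q * (1 - q ^ 2) * (u - v)) • (td2' v * f' v)
      = ((u - q ^ 2 * v) * (1 - q ^ 2 * u * v)) • (e' u * td2' v)
        - ((1 - q ^ 2) * (1 - q ^ 2 * u * v) * v) • (e' v * td2' v))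
    (h58 : ∀ u v : F,
      (u * (1 - q ^ 2) * (1 - q ^ 2 * u * v)) • (td2' v * f' v)
        - ((u - q ^ 2 * v) * (1 - q ^ 2 * u * v)) • (td2' v * f' u)
      = (q * u * v * (1 - q ^ 2) * (u - v)) • (e' v * td2' v)
        - ((u - v) * (1 - q ^ 4 * u * v)) • (f' u * td2' v))
    (u v : F) (hu : u ≠ 0) (hv : v ≠ 0)
    (hden : (1 - q ^ 3 * u * v) * (1 - q * u * v⁻¹) ≠ 0) :
    td2' u * (e' (v * q⁻¹) - q • f' (v⁻¹ * q⁻¹))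
      = (((1 - q * u * v) * (1 - q ^ 3 * u * v⁻¹)) /
          ((1 - q ^ 3 * u * v) * (1 - q * u * v⁻¹))) •
        ((e' (v * q⁻¹) - q • f' (v⁻¹ * q⁻¹)) * td2' u) :=
  d2_commutation_general q hq td2' e' f' h57 h58 u v hv hden
end
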